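/- arXiv:1904.10112 — 3 statements merged into one kernel-verified Lean document; each statement's English description precedes it below -/
import Mathlib

section
/- Let ψ(x) = ⟨x, u⟩ + (1/(2γ))‖x - v‖² for γ > 0, and let x' = argmin_{x ∈ X} ψ(x) over a closed convex set X ⊆ ℝ^d. Then for every x ∈ X: ⟨v - x, u⟩ ≤ (γ/2)‖u‖² + (1/(2γ))‖x - v‖² - (1/(2γ))‖x - x'‖². -/
/-!
The minimizer `x'` satisfies the first-order optimality condition: the gradient
`u + γ⁻¹ (x' - v)` of `ψ` at `x'` pairs nonnegatively with every feasible direction `x - x'`.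
Hence `⟪x' - x, u⟫ ≤ γ⁻¹ ⟪x' - v, x - x'⟫`, and the three-point identity rewrites the right-hand
side as `(‖x - v‖² - ‖x' - v‖² - ‖x - x'‖²) / (2γ)`. Adding Young's inequality
`⟪v - x', u⟫ ≤ γ/2 ‖u‖² + ‖x' - v‖² / (2γ)` cancels the `‖x' - v‖²` terms.
-/

open scoped RealInnerProductSpace

variable {E : Type*} [NormedAddCommGroup E] [InnerProductSpace ℝ E]

theorem real_inner_le_mul_norm_sq_add_div_mul_norm_sq (w u : E) {γ : ℝ} (hγ : 0 < γ) :
    ⟪w, u⟫ ≤ γ / 2 * ‖u‖ ^ 2 + 1 / (2 * γ) * ‖w‖ ^ 2 := by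
  have hgap : γ / 2 * ‖u‖ ^ 2 + 1 / (2 * γ) * ‖w‖ ^ 2 - ‖w‖ * ‖u‖
      = (‖w‖ - γ * ‖u‖) ^ 2 / (2 * γ) := by
    field_simp
    ring
  have hgap_nonneg : 0 ≤ (‖w‖ - γ * ‖u‖) ^ 2 / (2 * γ) := by positivity
  linarith [real_inner_le_norm w u]

theorem hasFDerivAt_inner_add_mul_norm_sub_sq (u v a : E) (c : ℝ) :
    HasFDerivAt (fun x ↦ ⟪x, u⟫ + c * ‖x - v‖ ^ 2)
      (innerSL ℝ u + (2 * c) • innerSL ℝ (a - v)) a := by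
  have hlin : HasFDerivAt (fun x ↦ ⟪x, u⟫) (innerSL ℝ u) a := by
    convert (innerSL ℝ u).hasFDerivAt using 1
    ext x
    simp [real_inner_comm]
  have hsq := ((hasFDerivAt_id a).sub_const v).norm_sq.const_mul c
  refine (hlin.add hsq).congr_fderiv ?_
  ext y
  simp only [add_apply, smul_apply, innerSL_apply_apply,
    ContinuousLinearMap.comp_apply, ContinuousLinearMap.id_apply, id, smul_eq_mul, nsmul_eq_mul]
  ring

theorem IsMinOn.inner_add_inv_smul_sub_nonneg {s : Set E} (hs : Convex ℝ s) {u v a x : E}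
    {γ : ℝ} (hmin : IsMinOn (fun x ↦ ⟪x, u⟫ + 1 / (2 * γ) * ‖x - v‖ ^ 2) s a) (ha : a ∈ s)
    (hx : x ∈ s) : 0 ≤ ⟪u + γ⁻¹ • (a - v), x - a⟫ := by
  have hfermat := hmin.localize.hasFDerivWithinAt_nonneg
    (hasFDerivAt_inner_add_mul_norm_sub_sq u v a _).hasFDerivWithinAt
    (sub_mem_posTangentConeAt_of_segment_subset (hs.segment_subset ha hx))
  convert hfermat using 1
  simp only [add_apply, smul_apply, innerSL_apply_apply,
    smul_eq_mul, inner_add_left, real_inner_smul_left]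
  ring

theorem inner_sub_le_of_inner_add_inv_smul_sub_nonneg {u v a x : E} {γ : ℝ} (hγ : 0 < γ)
    (hopt : 0 ≤ ⟪u + γ⁻¹ • (a - v), x - a⟫) :
    ⟪v - x, u⟫ ≤ γ / 2 * ‖u‖ ^ 2 + 1 / (2 * γ) * ‖x - v‖ ^ 2 - 1 / (2 * γ) * ‖x - a‖ ^ 2 := by
  rw [inner_add_left, real_inner_smul_left] at hopt
  have hthree : ‖x - v‖ ^ 2 = ‖x - a‖ ^ 2 + 2 * ⟪a - v, x - a⟫ + ‖a - v‖ ^ 2 := by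
    rw [← sub_add_sub_cancel x a v, norm_add_sq_real, real_inner_comm]
  have hyoung := real_inner_le_mul_norm_sq_add_div_mul_norm_sq (v - a) u hγ
  have hsplit : ⟪v - x, u⟫ = ⟪v - a, u⟫ - ⟪u, x - a⟫ := by
    rw [← sub_sub_sub_cancel_right v x a, inner_sub_left, real_inner_comm (x - a)]
  have hscale : γ⁻¹ * ⟪a - v, x - a⟫
      = 1 / (2 * γ) * ‖x - v‖ ^ 2 - 1 / (2 * γ) * ‖x - a‖ ^ 2 - 1 / (2 * γ) * ‖a - v‖ ^ 2 := by
    rw [hthree]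
    field_simp
    ring
  rw [norm_sub_rev] at hyoung
  linarith

theorem stmt2_general {d : ℕ} (X : Set (EuclideanSpace ℝ (Fin d)))
    (hX : Convex ℝ X)
    (u v : EuclideanSpace ℝ (Fin d)) (γ : ℝ) (hγ : 0 < γ)
    (x' : EuclideanSpace ℝ (Fin d)) (hx'X : x' ∈ X)
    (hmin : ∀ x ∈ X,
      ⟪x', u⟫ + 1 / (2 * γ) * ‖x' - v‖ ^ 2 ≤ ⟪x, u⟫ + 1 / (2 * γ) * ‖x - v‖ ^ 2) :
    ∀ x ∈ X,
      ⟪v - x, u⟫ ≤ γ / 2 * ‖u‖ ^ 2 + 1 / (2 * γ) * ‖x - v‖ ^ 2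
        - 1 / (2 * γ) * ‖x - x'‖ ^ 2 := fun _ hx ↦
  inner_sub_le_of_inner_add_inv_smul_sub_nonneg hγ
    ((isMinOn_iff.2 hmin).inner_add_inv_smul_sub_nonneg hX hx'X hx)

/-- Minimizer inequality for `ψ(x) = ⟨x,u⟩ + (1/(2γ))‖x-v‖²` over a closed convex set `X`. -/
theorem stmt2 {d : ℕ} (X : Set (EuclideanSpace ℝ (Fin d)))
    (hX : Convex ℝ X) (hXc : IsClosed X) (hXne : X.Nonempty)
    (u v : EuclideanSpace ℝ (Fin d)) (γ : ℝ) (hγ : 0 < γ)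
    (x' : EuclideanSpace ℝ (Fin d)) (hx'X : x' ∈ X)
    (hmin : ∀ x ∈ X,
      ⟪x', u⟫ + 1 / (2 * γ) * ‖x' - v‖ ^ 2 ≤ ⟪x, u⟫ + 1 / (2 * γ) * ‖x - v‖ ^ 2) :
    ∀ x ∈ X,
      ⟪v - x, u⟫ ≤ γ / 2 * ‖u‖ ^ 2 + 1 / (2 * γ) * ‖x - v‖ ^ 2
        - 1 / (2 * γ) * ‖x - x'‖ ^ 2 :=
  stmt2_general X hX u v γ hγ x' hx'X hmin
end

section
/- Let P: X → ℝ be convex with optimal set X*, optimal value P*, and suppose P satisfies the local error bound condition dist(x, X*) ≤ c (P(x) - P*)^θ on the ε-sublevel set S_ε = {x : P(x) - P* ≤ ε}, with c > 0, θ ∈ [0,1]. For any x₀ with P(x₀) - P* ≤ ε' (for some ε' ≥ ε), let x† be the closest point to x₀ in S_ε. Then ‖x† - x₀‖ ≤ (c ε'/ε^{1-θ}). -/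
/-!
Let `g = P x₀ - P*` exceed `ε`. For every minimiser `z`, convexity puts the point of the
segment `[x₀, z]` at parameter `s = (g - ε) / g` in the `ε`-sublevel set, and it lies at distance
`s ‖z - x₀‖ ≤ s (dist(x†, z) + ‖x† - x₀‖)` from `x₀`. Minimality of `x†` then gives
`ε ‖x† - x₀‖ ≤ (g - ε) dist(x†, X*)` (Lemma 4 of Yang–Lin), and the error bound at `x†` bounds
`dist(x†, X*)` by `c ε^θ`.
-/

open Metric

variable {E : Type*} [NormedAddCommGroup E] [NormedSpace ℝ E]

lemma one_sub_mul_dist_le_mul_dist_of_lineMap_mem {S : Set E} {x₀ xdag z : E} {s : ℝ}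
    (hs : 0 ≤ s) (hclosest : ∀ y ∈ S, dist xdag x₀ ≤ dist y x₀)
    (hmem : AffineMap.lineMap x₀ z s ∈ S) :
    (1 - s) * dist xdag x₀ ≤ s * dist xdag z := by
  have hD : dist xdag x₀ ≤ s * (dist x₀ xdag + dist xdag z) :=
    calc dist xdag x₀ ≤ dist (AffineMap.lineMap x₀ z s) x₀ := hclosest _ hmem
      _ = s * dist x₀ z := by rw [dist_lineMap_left, Real.norm_of_nonneg hs]
      _ ≤ s * (dist x₀ xdag + dist xdag z) := by gcongr; exact dist_triangle _ _ _
  rw [dist_comm x₀ xdag] at hD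
  linarith

lemma ConvexOn.map_lineMap_le {X : Set E} {P : E → ℝ} (hP : ConvexOn ℝ X P) {x y : E}
    (hx : x ∈ X) (hy : y ∈ X) {s : ℝ} (hs₀ : 0 ≤ s) (hs₁ : s ≤ 1) :
    P (AffineMap.lineMap x y s) ≤ (1 - s) * P x + s * P y := by
  rw [AffineMap.lineMap_apply_module]
  exact hP.2 hx hy (by linarith) hs₀ (by ring)

theorem ConvexOn.mul_dist_le_mul_infDist {X Z : Set E} {P : E → ℝ} (hP : ConvexOn ℝ X P)
    {Pstar ε : ℝ} (hZ : Z.Nonempty) (hZX : ∀ z ∈ Z, z ∈ X ∧ P z = Pstar) {x₀ xdag : E}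
    (hx₀ : x₀ ∈ X) (hε : 0 < ε) (hgap : ε < P x₀ - Pstar)
    (hclosest : ∀ y ∈ X, P y - Pstar ≤ ε → dist xdag x₀ ≤ dist y x₀) :
    ε * dist xdag x₀ ≤ (P x₀ - Pstar - ε) * infDist xdag Z := by
  set g := P x₀ - Pstar
  have hg : 0 < g := hε.trans hgap
  have hgε : 0 < g - ε := by linarith
  set s := (g - ε) / g
  have hs₀ : 0 ≤ s := by positivity
  have hs₁ : s ≤ 1 := (div_le_one hg).2 (by linarith)
  have hgs : g * s = g - ε := mul_div_cancel₀ _ hg.ne'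
  have hdist : ∀ z ∈ Z, ε * dist xdag x₀ ≤ (g - ε) * dist xdag z := by
    intro z hz
    obtain ⟨hzX, hPz⟩ := hZX z hz
    have hPle := hP.map_lineMap_le hx₀ hzX hs₀ hs₁
    have hsub : AffineMap.lineMap x₀ z s ∈ {y ∈ X | P y - Pstar ≤ ε} := by
      refine ⟨hP.1.lineMap_mem hx₀ hzX ⟨hs₀, hs₁⟩, ?_⟩
      have hval : (1 - s) * P x₀ + s * P z - Pstar = ε := by
        rw [hPz]; linear_combination -hgs
      linarith
    have h := one_sub_mul_dist_le_mul_dist_of_lineMap_mem hs₀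
      (fun y hy => hclosest y hy.1 hy.2) hsub
    calc ε * dist xdag x₀ = g * ((1 - s) * dist xdag x₀) := by
          rw [← mul_assoc, mul_one_sub, hgs]; ring
      _ ≤ g * (s * dist xdag z) := by gcongr
      _ = (g - ε) * dist xdag z := by rw [← mul_assoc, hgs]
  have hinf : ε * dist xdag x₀ / (g - ε) ≤ infDist xdag Z :=
    (le_infDist hZ).2 fun z hz => (div_le_iff₀' hgε).2 (hdist z hz)
  rwa [div_le_iff₀' hgε] at hinf

theorem stmt11_general {d : ℕ} (X : Set (EuclideanSpace ℝ (Fin d)))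
    (P : EuclideanSpace ℝ (Fin d) → ℝ) (hPconv : ConvexOn ℝ X P)
    (Xstar : Set (EuclideanSpace ℝ (Fin d))) (hXstarne : Xstar.Nonempty)
    (Pstar : ℝ) (hXstar : ∀ z ∈ Xstar, z ∈ X ∧ P z = Pstar)
    (hPstar : ∀ x ∈ X, Pstar ≤ P x)
    (c θ ε ε' : ℝ) (hc : 0 < c) (hθ : θ ∈ Set.Icc (0 : ℝ) 1)
    (hε : 0 < ε)
    (hLEB : ∀ x ∈ X, P x - Pstar ≤ ε → infDist x Xstar ≤ c * (P x - Pstar) ^ θ)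
    (x₀ : EuclideanSpace ℝ (Fin d)) (hx₀ : x₀ ∈ X) (hx₀gap : P x₀ - Pstar ≤ ε')
    (xdag : EuclideanSpace ℝ (Fin d)) (hxdagmem : xdag ∈ X ∧ P xdag - Pstar ≤ ε)
    (hxdagclosest : ∀ z ∈ X, P z - Pstar ≤ ε → ‖xdag - x₀‖ ≤ ‖z - x₀‖) :
    ‖xdag - x₀‖ ≤ c * ε' / ε ^ (1 - θ) := by
  simp only [← dist_eq_norm] at hxdagclosest ⊢
  have hε' : 0 ≤ ε' := (sub_nonneg.2 (hPstar x₀ hx₀)).trans hx₀gap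
  rw [Real.rpow_sub hε, Real.rpow_one, div_div_eq_mul_div, le_div_iff₀ hε, mul_comm]
  rcases le_or_gt (P x₀ - Pstar) ε with hnear | hfar
  · have h0 : dist xdag x₀ = 0 := by simpa using hxdagclosest x₀ hx₀ hnear
    rw [h0, mul_zero]
    positivity
  have herr : infDist xdag Xstar ≤ c * ε ^ θ :=
    (hLEB xdag hxdagmem.1 hxdagmem.2).trans <| by
      gcongr
      · exact sub_nonneg.2 (hPstar xdag hxdagmem.1)
      · exact hθ.1
      · exact hxdagmem.2
  calc ε * dist xdag x₀ ≤ (P x₀ - Pstar - ε) * infDist xdag Xstar :=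
        hPconv.mul_dist_le_mul_infDist hXstarne hXstar hx₀ hε hfar hxdagclosest
    _ ≤ ε' * (c * ε ^ θ) := mul_le_mul (by linarith) herr infDist_nonneg hε'
    _ = c * ε' * ε ^ θ := by ring

/-- Under the local error bound condition on the `ε`-sublevel set, the distance from an
`ε'`-optimal point `x₀` to its closest point `x†` in the `ε`-sublevel set is at most
`c ε'/ε^{1-θ}`. -/
theorem stmt11 {d : ℕ} (X : Set (EuclideanSpace ℝ (Fin d)))
    (P : EuclideanSpace ℝ (Fin d) → ℝ) (hPconv : ConvexOn ℝ X P)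
    (Xstar : Set (EuclideanSpace ℝ (Fin d))) (hXstarne : Xstar.Nonempty)
    (Pstar : ℝ) (hXstar : ∀ z ∈ Xstar, z ∈ X ∧ P z = Pstar)
    (hPstar : ∀ x ∈ X, Pstar ≤ P x)
    (c θ ε ε' : ℝ) (hc : 0 < c) (hθ : θ ∈ Set.Icc (0 : ℝ) 1)
    (hε : 0 < ε) (hε' : ε ≤ ε')
    (hLEB : ∀ x ∈ X, P x - Pstar ≤ ε → infDist x Xstar ≤ c * (P x - Pstar) ^ θ)
    (x₀ : EuclideanSpace ℝ (Fin d)) (hx₀ : x₀ ∈ X) (hx₀gap : P x₀ - Pstar ≤ ε')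
    (xdag : EuclideanSpace ℝ (Fin d)) (hxdagmem : xdag ∈ X ∧ P xdag - Pstar ≤ ε)
    (hxdagclosest : ∀ z ∈ X, P z - Pstar ≤ ε → ‖xdag - x₀‖ ≤ ‖z - x₀‖)
    (hxdaglevel : P xdag - Pstar = min ε (P x₀ - Pstar)) :
    ‖xdag - x₀‖ ≤ c * ε' / ε ^ (1 - θ) :=
  stmt11_general X P hPconv Xstar hXstarne Pstar hXstar hPstar c θ ε ε' hc hθ hε hLEB x₀ hx₀ hx₀gap
    xdag hxdagmem hxdagclosest
end

section
/- Let h: ℝ^d → ℝ be p-uniformly convex with modulus λ > 0 and p ≥ 2 (h(x₁) ≥ h(x₂) + ⟨g, x₁-x₂⟩ + (λ/2)‖x₁-x₂‖^p for subgradients g). Then the convex conjugate h* is differentiable and ∇h* is (L, v)-Hölder continuous with v = 1/(p-1) and L = (1/λ)^v (up to a constant factor). -/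
/-!
Adding the uniform convexity inequality at two points `x₁, x₂` with subgradients `y₁, y₂` to the
one with the roles exchanged gives `λ ‖x₁ - x₂‖ ^ p ≤ ⟪y₁ - y₂, x₁ - x₂⟫`, hence
`‖x₁ - x₂‖ ≤ (‖y₁ - y₂‖ / λ) ^ (1 / (p - 1))`: the inverse of the subdifferential is Hölder.
By the `p`-growth of `h`, the supremum defining `h* y` is attained at some `X y`; then `y` is a
subgradient of `h` at `X y`, and `X y` is a subgradient of `h*` at `y`. A function whose
subgradient map is continuous at a point is differentiable there, so `∇h* = X`.
-/

open scoped RealInnerProductSpace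
open Set Filter Topology

theorem tendsto_mul_rpow_sub_mul_atTop {c p : ℝ} (hc : 0 < c) (hp : 1 < p) (a : ℝ) :
    Tendsto (fun r : ℝ => c * r ^ p - a * r) atTop atTop := by
  have hfactor : Tendsto (fun r : ℝ => c * r ^ (p - 1) - a) atTop atTop :=
    tendsto_atTop_add_const_right _ _ ((tendsto_rpow_atTop (by linarith)).const_mul_atTop hc)
  refine (tendsto_id.atTop_mul_atTop₀ hfactor).congr' ?_
  filter_upwards [eventually_gt_atTop 0] with r hr
  rw [id, mul_sub, ← mul_assoc, mul_comm r c, mul_assoc, ← Real.rpow_one_add' hr.le (by linarith)]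
  ring_nf

theorem le_mul_rpow_of_mul_rpow_le {lam p D a : ℝ} (hlam : 0 < lam) (hp : 1 < p) (hD : 0 ≤ D)
    (ha : 0 ≤ a) (h : lam * D ^ p ≤ a * D) :
    D ≤ (1 / lam) ^ (1 / (p - 1)) * a ^ (1 / (p - 1)) := by
  rcases hD.eq_or_lt with rfl | hD
  · positivity
  have hp1 : 0 < p - 1 := by linarith
  have hDp : D ^ (p - 1) ≤ a / lam := by
    rw [le_div_iff₀ hlam]
    have : D ^ p = D ^ (p - 1) * D := by
      rw [← Real.rpow_add_one hD.ne']; ring_nf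
    nlinarith
  calc D = (D ^ (p - 1)) ^ (1 / (p - 1)) := by
        rw [← Real.rpow_mul hD.le, mul_one_div_cancel hp1.ne', Real.rpow_one]
    _ ≤ (a / lam) ^ (1 / (p - 1)) := by gcongr
    _ = (1 / lam) ^ (1 / (p - 1)) * a ^ (1 / (p - 1)) := by
        rw [← Real.mul_rpow (by positivity) ha, one_div_mul_eq_div]

theorem continuous_of_norm_sub_le_mul_rpow {α β : Type*} [SeminormedAddCommGroup α]
    [SeminormedAddCommGroup β] {f : α → β} {C v : ℝ} (hv : 0 < v)
    (hf : ∀ x y, ‖f x - f y‖ ≤ C * ‖x - y‖ ^ v) : Continuous f := by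
  refine continuous_iff_continuousAt.2 fun y => tendsto_iff_norm_sub_tendsto_zero.2 ?_
  refine squeeze_zero (fun _ => norm_nonneg _) (fun x => hf x y) ?_
  have : Continuous fun x => C * ‖x - y‖ ^ v := by fun_prop (disch := exact hv.le)
  simpa [Real.zero_rpow hv.ne'] using this.tendsto y

theorem ConvexOn.exists_strongDual_subgradient {E : Type*} [NormedAddCommGroup E]
    [NormedSpace ℝ E] {h : E → ℝ} (hconv : ConvexOn ℝ univ h) (hcont : Continuous h) (x₀ : E) :
    ∃ φ : StrongDual ℝ E, ∀ z, h x₀ + φ (z - x₀) ≤ h z := by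
  -- Separate `(x₀, h x₀)` from the open strict epigraph; `c < 0` says the separating
  -- hyperplane is not vertical, so it is the graph of an affine minorant of `h`.
  have hSopen : IsOpen {q : E × ℝ | q.1 ∈ univ ∧ h q.1 < q.2} := by
    simpa using isOpen_lt (hcont.comp continuous_fst) continuous_snd
  obtain ⟨f, hf⟩ := geometric_hahn_banach_open_point hconv.convex_strict_epigraph hSopen
    (x := (x₀, h x₀)) (by simp)
  set c := f (0, 1)
  have hf_apply : ∀ x t, f (x, t) = f (x, 0) + t * c := fun x t => by
    rw [← smul_eq_mul, ← map_smul, ← map_add]; simp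
  have hc : c < 0 := by
    have := hf (x₀, h x₀ + 1) (by simp)
    rw [hf_apply x₀ (h x₀ + 1), hf_apply x₀ (h x₀)] at this
    linarith
  refine ⟨(-c)⁻¹ • f.comp (.inl ℝ E ℝ), fun z => le_of_forall_gt_imp_ge_of_dense fun t ht => ?_⟩
  have hzt := hf (z, t) (by simpa using ht)
  rw [hf_apply z t, hf_apply x₀ (h x₀)] at hzt
  have : f (z - x₀, 0) = f (z, 0) - f (x₀, 0) := by rw [← map_sub]; simp
  simp only [FunLike.coe_smul, ContinuousLinearMap.coe_comp, Pi.smul_apply,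
    Function.comp_apply, ContinuousLinearMap.inl_apply, smul_eq_mul, this]
  rw [← div_eq_inv_mul, ← le_sub_iff_add_le', div_le_iff₀ (by linarith)]
  linarith

variable {E : Type*} [NormedAddCommGroup E] [InnerProductSpace ℝ E]

def HasSubgradientAt (f : E → ℝ) (g x : E) : Prop :=
  ∀ z, f x + ⟪g, z - x⟫ ≤ f z

theorem ConvexOn.exists_hasSubgradientAt [CompleteSpace E] {h : E → ℝ}
    (hconv : ConvexOn ℝ univ h) (hcont : Continuous h) (x₀ : E) :
    ∃ g : E, HasSubgradientAt h g x₀ := by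
  obtain ⟨φ, hφ⟩ := hconv.exists_strongDual_subgradient hcont x₀
  exact ⟨(InnerProductSpace.toDual ℝ E).symm φ, fun z => by simpa using hφ z⟩

theorem tendsto_sub_inner_cocompact_atTop [ProperSpace E] {h : E → ℝ} {b c p : ℝ} {g : E}
    (hc : 0 < c) (hp : 1 < p) (hgrowth : ∀ z, b + ⟪g, z⟫ + c * ‖z‖ ^ p ≤ h z) (y : E) :
    Tendsto (fun z => h z - ⟪y, z⟫) (cocompact E) atTop := by
  refine tendsto_atTop_mono (fun z => ?_) (tendsto_atTop_add_const_left _ b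
    ((tendsto_mul_rpow_sub_mul_atTop hc hp ‖y - g‖).comp tendsto_norm_cocompact_atTop))
  have := real_inner_le_norm (y - g) z
  rw [inner_sub_left] at this
  simp only [Function.comp_apply]
  linarith [hgrowth z]

theorem exists_forall_inner_sub_le [ProperSpace E] {h : E → ℝ} {b c p : ℝ} {g : E}
    (hcont : Continuous h) (hc : 0 < c) (hp : 1 < p)
    (hgrowth : ∀ z, b + ⟪g, z⟫ + c * ‖z‖ ^ p ≤ h z) (y : E) :
    ∃ x, ∀ z, ⟪y, z⟫ - h z ≤ ⟪y, x⟫ - h x := by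
  obtain ⟨x, hx⟩ := Continuous.exists_forall_le (f := fun z => h z - ⟪y, z⟫) (by fun_prop)
    (tendsto_sub_inner_cocompact_atTop hc hp hgrowth y)
  exact ⟨x, fun z => by linarith [hx z]⟩

theorem hasGradientAt_of_hasSubgradientAt [CompleteSpace E] {f : E → ℝ} {g : E → E} {y : E}
    (hsub : ∀ x, HasSubgradientAt f (g x) x) (hg : ContinuousAt g y) :
    HasGradientAt f (g y) y := by
  have hremainder : ∀ w, ‖f (y + w) - f y - ⟪g y, w⟫‖ ≤ ‖g (y + w) - g y‖ * ‖w‖ := fun w => by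
    have lower := hsub y (y + w)
    have upper := hsub (y + w) y
    have := real_inner_le_norm (g (y + w) - g y) w
    rw [add_sub_cancel_left] at lower
    rw [sub_add_cancel_left, inner_neg_right] at upper
    rw [inner_sub_left] at this
    rw [Real.norm_of_nonneg (by linarith)]
    linarith
  have hg0 : Tendsto (fun w => ‖g (y + w) - g y‖) (𝓝 0) (𝓝 0) := by
    have : Tendsto (fun w => y + w) (𝓝 0) (𝓝 y) := by
      simpa using (continuous_const_add y).tendsto (0 : E)
    simpa using ((hg.tendsto.comp this).sub_const (g y)).norm
  rw [hasGradientAt_iff_hasFDerivAt, hasFDerivAt_iff_isLittleO_nhds_zero,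
    Asymptotics.isLittleO_iff]
  intro c hc
  filter_upwards [hg0.eventually (ge_mem_nhds hc)] with w hw
  simpa using (hremainder w).trans (mul_le_mul_of_nonneg_right hw (norm_nonneg w))

def IsUniformlyConvexWith (h : E → ℝ) (lam p : ℝ) : Prop :=
  ∀ x₁ x₂ g, HasSubgradientAt h g x₂ → h x₂ + ⟪g, x₁ - x₂⟫ + lam / 2 * ‖x₁ - x₂‖ ^ p ≤ h x₁

theorem IsUniformlyConvexWith.norm_sub_le {h : E → ℝ} {lam p : ℝ}
    (huc : IsUniformlyConvexWith h lam p) (hlam : 0 < lam) (hp : 1 < p) {x₁ x₂ y₁ y₂ : E}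
    (h₁ : HasSubgradientAt h y₁ x₁) (h₂ : HasSubgradientAt h y₂ x₂) :
    ‖x₁ - x₂‖ ≤ (1 / lam) ^ (1 / (p - 1)) * ‖y₁ - y₂‖ ^ (1 / (p - 1)) := by
  refine le_mul_rpow_of_mul_rpow_le hlam hp (norm_nonneg _) (norm_nonneg _) ?_
  have A := huc x₁ x₂ y₂ h₂
  have B := huc x₂ x₁ y₁ h₁
  have C := real_inner_le_norm (y₁ - y₂) (x₁ - x₂)
  rw [norm_sub_rev, ← neg_sub, inner_neg_right] at B
  rw [inner_sub_left] at C
  linarith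

-- `⨆` of an unbounded family is `0` in `ℝ`, so this is the convex conjugate only where the
-- supremum is finite.
noncomputable def convexConjugate (h : E → ℝ) (y : E) : ℝ :=
  ⨆ x, ⟪y, x⟫ - h x

theorem convexConjugate_eq_of_forall_le {h : E → ℝ} {x y : E}
    (hmax : ∀ z, ⟪y, z⟫ - h z ≤ ⟪y, x⟫ - h x) : convexConjugate h y = ⟪y, x⟫ - h x :=
  ciSup_eq_of_forall_le_of_forall_lt_exists_gt hmax fun _ hw => ⟨x, hw⟩

theorem hasSubgradientAt_of_forall_le {h : E → ℝ} {x y : E}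
    (hmax : ∀ z, ⟪y, z⟫ - h z ≤ ⟪y, x⟫ - h x) : HasSubgradientAt h y x := fun z => by
  rw [inner_sub_right]
  linarith [hmax z]

theorem hasSubgradientAt_convexConjugate {h : E → ℝ} {X : E → E}
    (hX : ∀ y z, ⟪y, z⟫ - h z ≤ ⟪y, X y⟫ - h (X y)) (y : E) :
    HasSubgradientAt (convexConjugate h) (X y) y := fun z => by
  rw [convexConjugate_eq_of_forall_le (hX y), convexConjugate_eq_of_forall_le (hX z),
    inner_sub_right, real_inner_comm y, real_inner_comm z]
  linarith [hX z (X y)]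

/-- If `h` is `p`-uniformly convex with modulus `λ > 0` and `p ≥ 2`, then its convex
conjugate `h*` is differentiable with `(L, v)`-Hölder continuous gradient, where
`v = 1/(p-1)` and `L = (1/λ)^v`, up to a constant factor. -/
theorem stmt16 {d : ℕ} (h : EuclideanSpace ℝ (Fin d) → ℝ) (lam p : ℝ)
    (hlam : 0 < lam) (hp : 2 ≤ p)
    (hconv : ConvexOn ℝ Set.univ h)
    (huc : ∀ x₁ x₂ g : EuclideanSpace ℝ (Fin d),
      (∀ z, h x₂ + ⟪g, z - x₂⟫ ≤ h z) →
      h x₂ + ⟪g, x₁ - x₂⟫ + lam / 2 * ‖x₁ - x₂‖ ^ p ≤ h x₁)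
    (hstar : EuclideanSpace ℝ (Fin d) → ℝ)
    (hstar_def : ∀ y, hstar y = ⨆ x, (⟪y, x⟫ - h x)) :
    ∃ (g : EuclideanSpace ℝ (Fin d) → EuclideanSpace ℝ (Fin d)) (Cf : ℝ), 0 < Cf ∧
      (∀ y, HasGradientAt hstar (g y) y) ∧
      ∀ y₁ y₂, ‖g y₁ - g y₂‖
        ≤ Cf * (1 / lam) ^ ((1 : ℝ) / (p - 1)) * ‖y₁ - y₂‖ ^ ((1 : ℝ) / (p - 1)) := by
  obtain rfl : hstar = convexConjugate h := funext hstar_def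
  have hp1 : 1 < p := by linarith
  have hcont : Continuous h := continuousOn_univ.1 (hconv.continuousOn isOpen_univ)
  obtain ⟨g₀, hg₀⟩ := hconv.exists_hasSubgradientAt hcont 0
  have hgrowth : ∀ z, h 0 + ⟪g₀, z⟫ + lam / 2 * ‖z‖ ^ p ≤ h z := fun z => by
    simpa using huc z 0 g₀ hg₀
  choose X hX using exists_forall_inner_sub_le hcont (by positivity) hp1 hgrowth
  have hholder : ∀ y₁ y₂, ‖X y₁ - X y₂‖
      ≤ (1 / lam) ^ (1 / (p - 1)) * ‖y₁ - y₂‖ ^ (1 / (p - 1)) := fun y₁ y₂ =>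
    IsUniformlyConvexWith.norm_sub_le huc hlam hp1
      (hasSubgradientAt_of_forall_le (hX y₁)) (hasSubgradientAt_of_forall_le (hX y₂))
  have hXcont : Continuous X :=
    continuous_of_norm_sub_le_mul_rpow (one_div_pos.2 (by linarith)) hholder
  refine ⟨X, 1, one_pos, fun y => ?_, by simpa using hholder⟩
  exact hasGradientAt_of_hasSubgradientAt (hasSubgradientAt_convexConjugate hX) hXcont.continuousAt
end
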